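/- Suppose the margin assumption holds (with optimal classifier (y_*,b_*) and optimal value d_* > 0) and both ‖·‖ and ‖·‖_* are strictly convex. Then for every t ≥ 1, the Algorithm 1 iterates satisfy y_*^⊤ v(y_t) ≥ ‖y_*‖_* · d_*/d_t > 0, where d_t is the optimal value of the max-margin problem whose optimal solution is (y_t,b_t). -/

import Mathlib

noncomputable section
open scoped Classical
open scoped RealInnerProductSpace
open scoped Topology

/-- Feature space: `ℝ^d` with the Euclidean (`ℓ₂`) norm as ambient norm. -/
abbrev E (d : ℕ) : Type := EuclideanSpace ℝ (Fin d)

/-- Sign function with the convention `sgn 0 = +1`. -/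
def sgn (t : ℝ) : ℝ := if 0 ≤ t then 1 else -1

/-- Dual norm `‖y‖_* = max { ⟪y,x⟫ : ‖x‖ ≤ 1 }` of a (semi)norm `p`. -/
def dualNorm {d : ℕ} (p : Seminorm ℝ (E d)) (y : E d) : ℝ :=
  sSup ((fun x => ⟪y, x⟫) '' {x | p x ≤ 1})

/-- Predicted label `p̂(x,y,b) = sgn(⟪y,x⟫ + b - 2‖y‖_*/c)`. -/
def pred {d : ℕ} (p : Seminorm ℝ (E d)) (c : ℝ) (x y : E d) (b : ℝ) : ℝ :=
  sgn (⟪y, x⟫ + b - 2 * dualNorm p y / c)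

/-- Agent response `r(A,y,b)`. -/
def resp {d : ℕ} (p : Seminorm ℝ (E d)) (v : E d → E d) (c : ℝ)
    (A y : E d) (b : ℝ) : E d :=
  if y ≠ 0 ∧ 0 ≤ (⟪y, A⟫ + b) / dualNorm p y ∧ (⟪y, A⟫ + b) / dualNorm p y < 2 / c
  then A + (2 / c - (⟪y, A⟫ + b) / dualNorm p y) • v y
  else A

/-- Proxy point `s(A,y,b)`. -/
def proxy {d : ℕ} (p : Seminorm ℝ (E d)) (v : E d → E d) (lbl : E d → ℝ) (c : ℝ)
    (A y : E d) (b : ℝ) : E d :=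
  if y ≠ 0 ∧ 0 ≤ (⟪y, A⟫ + b) / dualNorm p y ∧ (⟪y, A⟫ + b) / dualNorm p y < 2 / c
      ∧ lbl A = -1
  then A - ((⟪y, A⟫ + b) / dualNorm p y) • v y
  else resp p v c A y b

/-- Margin function `h(y,b;S⁺,S⁻)`. -/
def marginFn {d : ℕ} (Sp Sm : Set (E d)) (y : E d) (b : ℝ) : ℝ :=
  min (sInf ((fun x => ⟪y, x⟫ + b) '' Sp)) (sInf ((fun x => -⟪y, x⟫ - b) '' Sm))

/-- Strict convexity of a norm-like function: the triangle inequality is strict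
on non-collinear vectors. -/
def StrictlyConvexFn {d : ℕ} (N : E d → ℝ) : Prop :=
  ∀ w z : E d, (¬ ∃ t : ℝ, w = t • z ∨ z = t • w) →
    ∀ β : ℝ, 0 < β → β < 1 →
      N (β • w + (1 - β) • z) < β * N w + (1 - β) * N z

section Helpers
variable {d : ℕ}

lemma seminorm_sum_le (p : Seminorm ℝ (E d)) {ι : Type*} (s : Finset ι) (f : ι → E d) :
    p (∑ i ∈ s, f i) ≤ ∑ i ∈ s, p (f i) := by
  classical
  induction s using Finset.induction with
  | empty => simp
  | @insert a s h ih =>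
    rw [Finset.sum_insert h, Finset.sum_insert h]
    exact (map_add_le_add p _ _).trans (by linarith)

lemma coord_le_norm (x : E d) (i : Fin d) : |x i| ≤ ‖x‖ := by
  have h := abs_real_inner_le_norm (EuclideanSpace.single i (1:ℝ)) x
  rw [EuclideanSpace.inner_single_left] at h
  simpa [EuclideanSpace.norm_single] using h

lemma euclid_decomp (x : E d) : x = ∑ i, x i • EuclideanSpace.single i (1:ℝ) := by
  have h := (EuclideanSpace.basisFun (Fin d) ℝ).sum_repr x
  simpa [EuclideanSpace.basisFun_apply, EuclideanSpace.basisFun_repr] using h.symm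

lemma pnorm_upper (p : Seminorm ℝ (E d)) : ∃ C : ℝ, 0 < C ∧ ∀ x : E d, p x ≤ C * ‖x‖ := by
  refine ⟨(∑ i, p (EuclideanSpace.single i (1:ℝ))) + 1, ?_, fun x => ?_⟩
  · have : (0:ℝ) ≤ ∑ i, p (EuclideanSpace.single i (1:ℝ)) :=
      Finset.sum_nonneg fun i _ => apply_nonneg p _
    linarith
  · calc p x = p (∑ i, x i • EuclideanSpace.single i (1:ℝ)) := by rw [← euclid_decomp]
      _ ≤ ∑ i, p (x i • EuclideanSpace.single i (1:ℝ)) := seminorm_sum_le p _ _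
      _ = ∑ i, |x i| * p (EuclideanSpace.single i (1:ℝ)) := by
          refine Finset.sum_congr rfl fun i _ => ?_
          rw [map_smul_eq_mul, Real.norm_eq_abs]
      _ ≤ ∑ i, ‖x‖ * p (EuclideanSpace.single i (1:ℝ)) := by
          refine Finset.sum_le_sum fun i _ => ?_
          exact mul_le_mul_of_nonneg_right (coord_le_norm x i) (apply_nonneg p _)
      _ = (∑ i, p (EuclideanSpace.single i (1:ℝ))) * ‖x‖ := by
          rw [← Finset.mul_sum, mul_comm]
      _ ≤ ((∑ i, p (EuclideanSpace.single i (1:ℝ))) + 1) * ‖x‖ := by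
          have := norm_nonneg x; nlinarith

lemma pnorm_continuous (p : Seminorm ℝ (E d)) : Continuous fun x : E d => (p x : ℝ) := by
  obtain ⟨C, hC, h⟩ := pnorm_upper p
  refine LipschitzWith.continuous (K := ⟨C, hC.le⟩) (LipschitzWith.of_dist_le_mul fun x y => ?_)
  rw [Real.dist_eq, dist_eq_norm]
  calc |p x - p y| ≤ p (x - y) := abs_sub_map_le_sub p x y
    _ ≤ C * ‖x - y‖ := h _

lemma pnorm_lower (p : Seminorm ℝ (E d)) (hd : 1 ≤ d) (hpdef : ∀ x : E d, p x = 0 → x = 0) :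
    ∃ c : ℝ, 0 < c ∧ ∀ x : E d, c * ‖x‖ ≤ p x := by
  have hne : (Metric.sphere (0 : E d) 1).Nonempty := by
    refine ⟨EuclideanSpace.single (⟨0, hd⟩ : Fin d) (1:ℝ), ?_⟩
    simp [EuclideanSpace.norm_single]
  obtain ⟨x₀, hx₀, hmin⟩ := (isCompact_sphere (0 : E d) 1).exists_isMinOn hne
    ((pnorm_continuous p).continuousOn)
  have hx₀n : ‖x₀‖ = 1 := mem_sphere_zero_iff_norm.mp hx₀
  have hx₀0 : x₀ ≠ 0 := by intro h; rw [h] at hx₀n; simp at hx₀n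
  have hc : 0 < p x₀ := by
    rcases (apply_nonneg p x₀).lt_or_eq with h | h
    · exact h
    · exact absurd (hpdef x₀ h.symm) hx₀0
  refine ⟨p x₀, hc, fun x => ?_⟩
  rcases eq_or_ne x 0 with rfl | hx
  · simp
  · have hxn : 0 < ‖x‖ := norm_pos_iff.mpr hx
    have hmem : ‖x‖⁻¹ • x ∈ Metric.sphere (0 : E d) 1 := by
      simp [norm_smul, abs_of_pos (inv_pos.mpr hxn), inv_mul_cancel₀ hxn.ne']
    have h1 : p x₀ ≤ p (‖x‖⁻¹ • x) := hmin hmem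
    rw [map_smul_eq_mul, Real.norm_eq_abs, abs_of_pos (inv_pos.mpr hxn)] at h1
    calc p x₀ * ‖x‖ ≤ (‖x‖⁻¹ * p x) * ‖x‖ := by nlinarith
      _ = p x := by field_simp

end Helpers

section DualHelpers
variable {d : ℕ} {p : Seminorm ℝ (E d)}

lemma dualNorm_image_nonempty (p : Seminorm ℝ (E d)) (y : E d) :
    ((fun x => ⟪y, x⟫) '' {x | p x ≤ 1}).Nonempty :=
  ⟨⟪y, (0:E d)⟫, ⟨0, by simp, rfl⟩⟩

lemma dualNorm_bddAbove (hd : 1 ≤ d) (hpdef : ∀ x : E d, p x = 0 → x = 0) (y : E d) :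
    BddAbove ((fun x => ⟪y, x⟫) '' {x | p x ≤ 1}) := by
  obtain ⟨c, hc, hlow⟩ := pnorm_lower p hd hpdef
  refine ⟨‖y‖ * c⁻¹, ?_⟩
  rintro _ ⟨x, hx, rfl⟩
  have hxn : ‖x‖ ≤ c⁻¹ := by
    have h1 := (hlow x).trans hx
    rw [← le_div_iff₀' hc] at h1
    simpa [div_eq_mul_inv, one_mul] using h1
  calc ⟪y, x⟫ ≤ ‖y‖ * ‖x‖ := real_inner_le_norm y x
    _ ≤ ‖y‖ * c⁻¹ := mul_le_mul_of_nonneg_left hxn (norm_nonneg y)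

lemma inner_le_dualNorm (hd : 1 ≤ d) (hpdef : ∀ x : E d, p x = 0 → x = 0) {y x : E d}
    (hx : p x ≤ 1) : ⟪y, x⟫ ≤ dualNorm p y :=
  le_csSup (dualNorm_bddAbove hd hpdef y) ⟨x, hx, rfl⟩

lemma dualNorm_nonneg (hd : 1 ≤ d) (hpdef : ∀ x : E d, p x = 0 → x = 0) (y : E d) :
    0 ≤ dualNorm p y := by
  have := inner_le_dualNorm (y := y) (x := 0) hd hpdef (by simp)
  simpa using this

lemma dualNorm_le_of_forall (y : E d) {M : ℝ}
    (h : ∀ x : E d, p x ≤ 1 → ⟪y, x⟫ ≤ M) : dualNorm p y ≤ M := by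
  refine csSup_le (dualNorm_image_nonempty p y) ?_
  rintro _ ⟨x, hx, rfl⟩
  exact h x hx

lemma dualNorm_zero' (hd : 1 ≤ d) (hpdef : ∀ x : E d, p x = 0 → x = 0) :
    dualNorm p (0 : E d) = 0 :=
  le_antisymm (dualNorm_le_of_forall _ fun x _ => by simp)
    (dualNorm_nonneg hd hpdef 0)

lemma dualNorm_pos (hd : 1 ≤ d) (hpdef : ∀ x : E d, p x = 0 → x = 0) {y : E d}
    (hy : y ≠ 0) : 0 < dualNorm p y := by
  have hpy : 0 < p y := by
    rcases (apply_nonneg p y).lt_or_eq with h | h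
    · exact h
    · exact absurd (hpdef y h.symm) hy
  have hx : p ((p y)⁻¹ • y) ≤ 1 := by
    rw [map_smul_eq_mul, Real.norm_eq_abs, abs_of_pos (inv_pos.mpr hpy),
      inv_mul_cancel₀ hpy.ne']
  have h1 : ⟪y, (p y)⁻¹ • y⟫ = (p y)⁻¹ * ‖y‖ ^ 2 := by
    rw [real_inner_smul_right, real_inner_self_eq_norm_sq]
  have h2 : 0 < (p y)⁻¹ * ‖y‖ ^ 2 := by
    have : 0 < ‖y‖ := norm_pos_iff.mpr hy
    positivity
  have h3 := inner_le_dualNorm (y := y) hd hpdef hx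
  rw [h1] at h3
  linarith

lemma dualNorm_smul (hd : 1 ≤ d) (hpdef : ∀ x : E d, p x = 0 → x = 0) {a : ℝ}
    (ha : 0 ≤ a) (y : E d) : dualNorm p (a • y) = a * dualNorm p y := by
  rcases ha.lt_or_eq with ha' | rfl
  · refine le_antisymm ?_ ?_
    · refine dualNorm_le_of_forall _ fun x hx => ?_
      rw [real_inner_smul_left]
      exact mul_le_mul_of_nonneg_left (inner_le_dualNorm hd hpdef hx) ha'.le
    · rw [mul_comm, ← le_div_iff₀ ha', div_eq_mul_inv, mul_comm]
      refine dualNorm_le_of_forall _ fun x hx => ?_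
      rw [le_inv_mul_iff₀ ha', ← real_inner_smul_left]
      exact inner_le_dualNorm hd hpdef hx
  · rw [zero_smul, dualNorm_zero' hd hpdef, zero_mul]

lemma dualNorm_add_le (hd : 1 ≤ d) (hpdef : ∀ x : E d, p x = 0 → x = 0)
    {c : ℝ} (hc : 0 < c) (hlow : ∀ x : E d, c * ‖x‖ ≤ p x) (y z : E d) :
    dualNorm p y ≤ dualNorm p z + c⁻¹ * ‖y - z‖ := by
  refine dualNorm_le_of_forall _ fun x hx => ?_
  have hxn : ‖x‖ ≤ c⁻¹ := by
    have h1 := (hlow x).trans hx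
    rw [← le_div_iff₀' hc] at h1
    simpa [div_eq_mul_inv, one_mul] using h1
  have h2 : ⟪y, x⟫ = ⟪z, x⟫ + ⟪y - z, x⟫ := by
    rw [inner_sub_left]; ring
  have h3 : ⟪y - z, x⟫ ≤ ‖y - z‖ * ‖x‖ := real_inner_le_norm _ _
  have h4 : ‖y - z‖ * ‖x‖ ≤ c⁻¹ * ‖y - z‖ := by
    rw [mul_comm]
    exact mul_le_mul_of_nonneg_right hxn (norm_nonneg _)
  have := inner_le_dualNorm hd hpdef hx (y := z)
  linarith

lemma maximizer_unique (hd : 1 ≤ d) (hpdef : ∀ x : E d, p x = 0 → x = 0)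
    (hsc : ∀ w z : E d, (¬ ∃ t : ℝ, w = t • z ∨ z = t • w) →
      ∀ β : ℝ, 0 < β → β < 1 →
        p (β • w + (1 - β) • z) < β * p w + (1 - β) * p z)
    {y x₁ x₂ : E d} (hy : y ≠ 0) (h₁ : p x₁ ≤ 1) (e₁ : ⟪y, x₁⟫ = dualNorm p y)
    (h₂ : p x₂ ≤ 1) (e₂ : ⟪y, x₂⟫ = dualNorm p y) : x₁ = x₂ := by
  have hD : 0 < dualNorm p y := dualNorm_pos hd hpdef hy
  by_cases hcol : ∃ t : ℝ, x₁ = t • x₂ ∨ x₂ = t • x₁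
  · obtain ⟨t, h | h⟩ := hcol
    · have : ⟪y, x₁⟫ = t * ⟪y, x₂⟫ := by rw [h, real_inner_smul_right]
      rw [e₁, e₂] at this
      have ht : t = 1 := by
        have := mul_right_cancel₀ hD.ne' (by linarith [this] : t * dualNorm p y = 1 * dualNorm p y)
        linarith
      rw [h, ht, one_smul]
    · have : ⟪y, x₂⟫ = t * ⟪y, x₁⟫ := by rw [h, real_inner_smul_right]
      rw [e₁, e₂] at this
      have ht : t = 1 := by
        have := mul_right_cancel₀ hD.ne' (by linarith [this] : t * dualNorm p y = 1 * dualNorm p y)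
        linarith
      rw [h, ht, one_smul]
  · exfalso
    set m : E d := (1/2 : ℝ) • x₁ + (1/2 : ℝ) • x₂ with hm
    have hpm : p m < 1 := by
      have h := hsc x₁ x₂ hcol (1/2) (by norm_num) (by norm_num)
      have : p ((1/2 : ℝ) • x₁ + (1 - 1/2 : ℝ) • x₂) < (1/2) * p x₁ + (1 - 1/2) * p x₂ := h
      norm_num at this
      rw [hm]
      norm_num
      linarith
    have him : ⟪y, m⟫ = dualNorm p y := by
      rw [hm, inner_add_right, real_inner_smul_right, real_inner_smul_right, e₁, e₂]
      ring
    have hm0 : m ≠ 0 := by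
      intro h
      rw [h, inner_zero_right] at him
      linarith
    have hpm0 : 0 < p m := by
      rcases (apply_nonneg p m).lt_or_eq with h | h
      · exact h
      · exact absurd (hpdef m h.symm) hm0
    have hx' : p ((p m)⁻¹ • m) ≤ 1 := by
      rw [map_smul_eq_mul, Real.norm_eq_abs, abs_of_pos (inv_pos.mpr hpm0),
        inv_mul_cancel₀ hpm0.ne']
    have h5 := inner_le_dualNorm (y := y) hd hpdef hx'
    rw [real_inner_smul_right, him] at h5
    have : 1 < (p m)⁻¹ := by
      rw [lt_inv_comm₀] <;> try norm_num
      · exact hpm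
      · exact hpm0
    nlinarith

end DualHelpers

section MarginHelpers
variable {d : ℕ}

lemma csInf_image_le' {S : Set (E d)} (hfin : S.Finite) {f : E d → ℝ} {x : E d}
    (hx : x ∈ S) : sInf (f '' S) ≤ f x :=
  csInf_le (hfin.image f).bddBelow ⟨x, hx, rfl⟩

lemma le_csInf_image' {S : Set (E d)} (hne : S.Nonempty) {f : E d → ℝ} {m : ℝ}
    (h : ∀ x ∈ S, m ≤ f x) : m ≤ sInf (f '' S) := by
  refine le_csInf (hne.image f) ?_
  rintro _ ⟨x, hx, rfl⟩
  exact h x hx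

lemma sInf_image_mul {S : Set (E d)} (hfin : S.Finite) (hne : S.Nonempty)
    (f : E d → ℝ) {a : ℝ} (ha : 0 < a) :
    sInf ((fun x => a * f x) '' S) = a * sInf (f '' S) := by
  obtain ⟨x₀, hx₀, h₀⟩ : ∃ x₀ ∈ S, f x₀ = sInf (f '' S) := by
    have := (hne.image f).csInf_mem (hfin.image f)
    obtain ⟨x₀, hx₀, h₀⟩ := this
    exact ⟨x₀, hx₀, h₀⟩
  obtain ⟨x₁, hx₁, h₁⟩ : ∃ x₁ ∈ S, a * f x₁ = sInf ((fun x => a * f x) '' S) := by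
    have := (hne.image (fun x => a * f x)).csInf_mem (hfin.image _)
    obtain ⟨x₁, hx₁, h₁⟩ := this
    exact ⟨x₁, hx₁, h₁⟩
  refine le_antisymm ?_ ?_
  · calc sInf ((fun x => a * f x) '' S) ≤ a * f x₀ := csInf_image_le' hfin hx₀
      _ = a * sInf (f '' S) := by rw [h₀]
  · rw [← h₁]
    exact mul_le_mul_of_nonneg_left (csInf_image_le' hfin hx₁) ha.le
end MarginHelpers

section MarginHelpers2
variable {d : ℕ}

lemma marginFn_smul {Sp Sm : Set (E d)} (hfp : Sp.Finite) (hnp : Sp.Nonempty)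
    (hfm : Sm.Finite) (hnm : Sm.Nonempty) (y : E d) (b : ℝ) {a : ℝ} (ha : 0 < a) :
    marginFn Sp Sm (a • y) (a * b) = a * marginFn Sp Sm y b := by
  unfold marginFn
  have h1 : (fun x : E d => ⟪a • y, x⟫ + a * b) = fun x => a * (⟪y, x⟫ + b) := by
    funext x; rw [real_inner_smul_left]; ring
  have h2 : (fun x : E d => -⟪a • y, x⟫ - a * b) = fun x => a * (-⟪y, x⟫ - b) := by
    funext x; rw [real_inner_smul_left]; ring
  rw [h1, h2, sInf_image_mul hfp hnp _ ha, sInf_image_mul hfm hnm _ ha,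
    mul_min_of_nonneg _ _ ha.le]

lemma le_marginFn {Sp Sm : Set (E d)} (hnp : Sp.Nonempty) (hnm : Sm.Nonempty)
    {y : E d} {b m : ℝ} (h1 : ∀ x ∈ Sp, m ≤ ⟪y, x⟫ + b)
    (h2 : ∀ x ∈ Sm, m ≤ -⟪y, x⟫ - b) : m ≤ marginFn Sp Sm y b :=
  le_min (le_csInf_image' hnp h1) (le_csInf_image' hnm h2)

lemma marginFn_le_pos {Sp Sm : Set (E d)} (hfp : Sp.Finite) {y : E d} {b : ℝ}
    {x : E d} (hx : x ∈ Sp) : marginFn Sp Sm y b ≤ ⟪y, x⟫ + b :=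
  (min_le_left _ _).trans (csInf_image_le' hfp hx)

lemma marginFn_le_neg {Sp Sm : Set (E d)} (hfm : Sm.Finite) {y : E d} {b : ℝ}
    {x : E d} (hx : x ∈ Sm) : marginFn Sp Sm y b ≤ -⟪y, x⟫ - b :=
  (min_le_right _ _).trans (csInf_image_le' hfm hx)

lemma marginFn_zero_le {Sp Sm : Set (E d)} (hnp : Sp.Nonempty) (hnm : Sm.Nonempty)
    (b : ℝ) : marginFn Sp Sm (0 : E d) b ≤ 0 := by
  unfold marginFn
  have e1 : (fun x : E d => ⟪(0 : E d), x⟫ + b) '' Sp = {b} := by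
    rw [show (fun x : E d => ⟪(0 : E d), x⟫ + b) = fun _ => b from funext fun x => by simp]
    exact hnp.image_const b
  have e2 : (fun x : E d => -⟪(0 : E d), x⟫ - b) '' Sm = {-b} := by
    rw [show (fun x : E d => -⟪(0 : E d), x⟫ - b) = fun _ => -b from funext fun x => by simp]
    exact hnm.image_const (-b)
  rw [e1, e2, csInf_singleton, csInf_singleton]
  rcases le_total b 0 with h | h
  · exact min_le_of_left_le h
  · exact min_le_of_right_le (by linarith)

end MarginHelpers2

section ContHelpers
variable {d : ℕ} {p : Seminorm ℝ (E d)}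
open Filter

lemma dualNorm_tendsto (hd : 1 ≤ d) (hpdef : ∀ x : E d, p x = 0 → x = 0)
    {yn : ℕ → E d} {y : E d} (h : Tendsto yn atTop (𝓝 y)) :
    Tendsto (fun n => dualNorm p (yn n)) atTop (𝓝 (dualNorm p y)) := by
  obtain ⟨c, hc, hlow⟩ := pnorm_lower p hd hpdef
  have hb : ∀ n, |dualNorm p (yn n) - dualNorm p y| ≤ c⁻¹ * ‖yn n - y‖ := by
    intro n
    rw [abs_sub_le_iff]
    constructor
    · have h1 := dualNorm_add_le hd hpdef hc hlow (yn n) y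
      linarith
    · have h1 := dualNorm_add_le hd hpdef hc hlow y (yn n)
      rw [norm_sub_rev] at h1
      linarith
  have hn0 : Tendsto (fun n => ‖yn n - y‖) atTop (𝓝 0) :=
    tendsto_iff_norm_sub_tendsto_zero.mp h
  have h0 : Tendsto (fun n => c⁻¹ * ‖yn n - y‖) atTop (𝓝 0) := by
    have := hn0.const_mul c⁻¹
    simpa using this
  have hz : Tendsto (fun n => dualNorm p (yn n) - dualNorm p y) atTop (𝓝 0) := by
    refine squeeze_zero_norm (fun n => ?_) h0
    rw [Real.norm_eq_abs]
    exact hb n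
  have := hz.add (tendsto_const_nhds (x := dualNorm p y))
  simpa using this

lemma unitBall_compact (hd : 1 ≤ d) (hpdef : ∀ x : E d, p x = 0 → x = 0) :
    IsCompact {x : E d | p x ≤ 1} := by
  obtain ⟨c, hc, hlow⟩ := pnorm_lower p hd hpdef
  have hclosed : IsClosed {x : E d | p x ≤ 1} :=
    isClosed_Iic.preimage (pnorm_continuous p)
  have hbdd : Bornology.IsBounded {x : E d | p x ≤ 1} := by
    refine (Metric.isBounded_closedBall (x := (0 : E d)) (r := c⁻¹)).subset ?_
    intro x hx
    rw [Metric.mem_closedBall, dist_zero_right]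
    have h1 := (hlow x).trans hx
    rw [← le_div_iff₀' hc] at h1
    simpa [div_eq_mul_inv, one_mul] using h1
  exact Metric.isCompact_of_isClosed_isBounded hclosed hbdd

end ContHelpers

set_option maxHeartbeats 2000000 in
/-- Lemma `y_star-y-nonnegative`: under the margin and strict
convexity assumptions, every classifier `(y_t,b_t)` generated by Algorithm 1
satisfies `⟪y_*, v(y_t)⟫ ≥ ‖y_*‖_* · d_*/d_t > 0`. -/
theorem alg1_alignment
    {d : ℕ} (hd : 1 ≤ d)
    (p : Seminorm ℝ (E d)) (hpdef : ∀ x : E d, p x = 0 → x = 0)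
    (c : ℝ) (hc : 0 < c)
    (v : E d → E d) (hv0 : v 0 = 0)
    (hv : ∀ y : E d, y ≠ 0 → p (v y) ≤ 1 ∧ ⟪y, v y⟫ = dualNorm p y)
    (lbl : E d → ℝ) (hlbl : ∀ A : E d, lbl A = 1 ∨ lbl A = -1)
    (𝒜 : Set (E d))
    -- margin assumption: `(ystar,bstar)` attains the maximum margin `dstar > 0`
    (ystar : E d) (bstar dstar : ℝ)
    (hystar : ystar ≠ 0) (hdstar : 0 < dstar)
    (hsep : ∀ A ∈ 𝒜, dstar * dualNorm p ystar ≤ lbl A * (⟪ystar, A⟫ + bstar))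
    (hmax : ∀ (y : E d) (b t : ℝ), y ≠ 0 →
      (∀ A ∈ 𝒜, t * dualNorm p y ≤ lbl A * (⟪y, A⟫ + b)) → t ≤ dstar)
    -- strict convexity assumption
    (hsc : StrictlyConvexFn (fun x => (p x : ℝ)))
    (hscd : StrictlyConvexFn (dualNorm p))
    -- Algorithm 1
    (Ag : ℕ → E d) (hAg : ∀ t, 1 ≤ t → Ag t ∈ 𝒜)
    (Sp Sm : ℕ → Set (E d))
    (hS0p : (Sp 0).Finite ∧ (Sp 0).Nonempty ∧ Sp 0 ⊆ {A | A ∈ 𝒜 ∧ lbl A = 1})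
    (hS0m : (Sm 0).Finite ∧ (Sm 0).Nonempty ∧ Sm 0 ⊆ {A | A ∈ 𝒜 ∧ lbl A = -1})
    (ys : ℕ → E d) (bs dseq : ℕ → ℝ)
    (hupd : ∀ t, 1 ≤ t →
      (lbl (Ag t) = 1 →
        Sp t = insert (proxy p v lbl c (Ag t) (ys t) (bs t)) (Sp (t - 1)) ∧
        Sm t = Sm (t - 1)) ∧
      (lbl (Ag t) = -1 →
        Sm t = insert (proxy p v lbl c (Ag t) (ys t) (bs t)) (Sm (t - 1)) ∧
        Sp t = Sp (t - 1)))
    (hsol : ∀ t, 1 ≤ t →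
      dualNorm p (ys t) ≤ 1 ∧
      marginFn (Sp (t - 1)) (Sm (t - 1)) (ys t) (bs t) = dseq t ∧
      ∀ (y : E d) (b : ℝ), dualNorm p y ≤ 1 →
        marginFn (Sp (t - 1)) (Sm (t - 1)) y b ≤ dseq t)
    :
    ∀ t, 1 ≤ t →
      dualNorm p ystar * (dstar / dseq t) ≤ ⟪ystar, v (ys t)⟫ ∧
      0 < dualNorm p ystar * (dstar / dseq t) := by
  have hDstar : 0 < dualNorm p ystar := dualNorm_pos hd hpdef hystar
  set yh : E d := (dualNorm p ystar)⁻¹ • ystar with hyh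
  set bh : ℝ := (dualNorm p ystar)⁻¹ * bstar with hbh
  have hDyh : dualNorm p yh = 1 := by
    rw [hyh, dualNorm_smul hd hpdef (by positivity) ystar, inv_mul_cancel₀ hDstar.ne']
  have hyhinner : ∀ w : E d, ⟪yh, w⟫ = (dualNorm p ystar)⁻¹ * ⟪ystar, w⟫ := fun w => by
    rw [hyh, real_inner_smul_left]
  have key : ∀ t : ℕ,
      ((Sp t).Finite ∧ (Sp t).Nonempty ∧ (Sm t).Finite ∧ (Sm t).Nonempty ∧
       (∀ x ∈ Sp t, dstar * dualNorm p ystar ≤ ⟪ystar, x⟫ + bstar) ∧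
       (∀ x ∈ Sm t, dstar * dualNorm p ystar ≤ -⟪ystar, x⟫ - bstar)) ∧
      (1 ≤ t →
        dualNorm p ystar * (dstar / dseq t) ≤ ⟪ystar, v (ys t)⟫ ∧
        0 < dualNorm p ystar * (dstar / dseq t)) := by
    intro t
    induction t with
    | zero =>
      refine ⟨⟨hS0p.1, hS0p.2.1, hS0m.1, hS0m.2.1, ?_, ?_⟩, by omega⟩
      · intro x hx
        have h := hS0p.2.2 hx
        have h2 := hsep x h.1
        rw [h.2, one_mul] at h2
        exact h2
      · intro x hx
        have h := hS0m.2.2 hx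
        have h2 := hsep x h.1
        rw [h.2] at h2
        linarith
    | succ t ih =>
      obtain ⟨⟨hfp, hnp, hfm, hnm, hSpStar, hSmStar⟩, -⟩ := ih
      have hT1 : 1 ≤ t + 1 := Nat.le_add_left 1 t
      obtain ⟨hyleq, hmargT, hopt⟩ := hsol (t + 1) hT1
      rw [Nat.add_sub_cancel] at hmargT hopt
      -- Step 1: dstar ≤ dseq (t+1)
      have hfeas : dstar ≤ marginFn (Sp t) (Sm t) yh bh := by
        refine le_marginFn hnp hnm ?_ ?_
        · intro x hx
          have h3 : ⟪yh, x⟫ + bh = (dualNorm p ystar)⁻¹ * (⟪ystar, x⟫ + bstar) := by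
            rw [hyhinner, hbh]; ring
          rw [h3, le_inv_mul_iff₀ hDstar]
          linarith [hSpStar x hx]
        · intro x hx
          have h3 : -⟪yh, x⟫ - bh = (dualNorm p ystar)⁻¹ * (-⟪ystar, x⟫ - bstar) := by
            rw [hyhinner, hbh]; ring
          rw [h3, le_inv_mul_iff₀ hDstar]
          linarith [hSmStar x hx]
      have hd1 : dstar ≤ dseq (t + 1) := hfeas.trans (hopt yh bh hDyh.le)
      have hdT : 0 < dseq (t + 1) := lt_of_lt_of_le hdstar hd1
      -- Step 2: ys (t+1) ≠ 0 and its dual norm is 1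
      have hne0 : ys (t + 1) ≠ 0 := by
        intro h0
        rw [h0] at hmargT
        have h1 := marginFn_zero_le hnp hnm (bs (t + 1))
        rw [hmargT] at h1
        linarith
      have hDTpos : 0 < dualNorm p (ys (t + 1)) := dualNorm_pos hd hpdef hne0
      have hDT1 : dualNorm p (ys (t + 1)) = 1 := by
        by_contra hne1
        have hl : dualNorm p (ys (t + 1)) < 1 := lt_of_le_of_ne hyleq hne1
        have hapos : 0 < (dualNorm p (ys (t + 1)))⁻¹ := inv_pos.mpr hDTpos
        have h1 : dualNorm p ((dualNorm p (ys (t + 1)))⁻¹ • ys (t + 1)) = 1 := by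
          rw [dualNorm_smul hd hpdef hapos.le, inv_mul_cancel₀ hDTpos.ne']
        have h2 := hopt _ ((dualNorm p (ys (t + 1)))⁻¹ * bs (t + 1)) h1.le
        rw [marginFn_smul hfp hnp hfm hnm _ _ hapos, hmargT] at h2
        have ha1 : 1 < (dualNorm p (ys (t + 1)))⁻¹ := by
          have hfact : dualNorm p (ys (t + 1)) * (dualNorm p (ys (t + 1)))⁻¹ = 1 :=
            mul_inv_cancel₀ hDTpos.ne'
          nlinarith
        nlinarith
      obtain ⟨hpv, hinner⟩ := hv (ys (t + 1)) hne0
      rw [hDT1] at hinner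
      -- Step 3: margins of individual points for (ys (t+1), bs (t+1))
      have hSpT : ∀ x ∈ Sp t, dseq (t + 1) ≤ ⟪ys (t + 1), x⟫ + bs (t + 1) := by
        intro x hx
        rw [← hmargT]
        exact marginFn_le_pos hfp hx
      have hSmT : ∀ x ∈ Sm t, dseq (t + 1) ≤ -⟪ys (t + 1), x⟫ - bs (t + 1) := by
        intro x hx
        rw [← hmargT]
        exact marginFn_le_neg hfm hx
      -- Step 4: perturbation estimate
      have claim6 : ∀ β : ℝ, 0 < β → β < 1/2 →
          ((1 - β) • ys (t + 1) + β • yh ≠ 0) ∧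
          dstar / dseq (t + 1) ≤ ⟪yh, v ((1 - β) • ys (t + 1) + β • yh)⟫ := by
        intro β hβ0 hβh
        set yβ : E d := (1 - β) • ys (t + 1) + β • yh with hyβ
        set bβ : ℝ := (1 - β) * bs (t + 1) + β * bh with hbβ
        have hyhv1 : ⟪yh, v (ys (t + 1))⟫ ≤ 1 := by
          have h1 := inner_le_dualNorm (y := yh) hd hpdef hpv
          rwa [hDyh] at h1
        have hyhvm1 : -1 ≤ ⟪yh, v (ys (t + 1))⟫ := by
          have hneg : p (-(v (ys (t + 1)))) ≤ 1 := by rwa [map_neg_eq_map]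
          have h1 := inner_le_dualNorm (y := yh) hd hpdef hneg
          rw [inner_neg_right, hDyh] at h1
          linarith
        have hlb : 1 - 2*β ≤ dualNorm p yβ := by
          have h1 : ⟪yβ, v (ys (t + 1))⟫ ≤ dualNorm p yβ := inner_le_dualNorm hd hpdef hpv
          have h2 : ⟪yβ, v (ys (t + 1))⟫ = (1-β) * 1 + β * ⟪yh, v (ys (t + 1))⟫ := by
            rw [hyβ, inner_add_left, real_inner_smul_left, real_inner_smul_left, hinner]
          nlinarith
        have hβpos : 0 < dualNorm p yβ := by linarith
        have hyβ0 : yβ ≠ 0 := by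
          intro h
          rw [h, dualNorm_zero' hd hpdef] at hβpos
          linarith
        have hmargβ : (1-β) * dseq (t + 1) + β * dstar ≤ marginFn (Sp t) (Sm t) yβ bβ := by
          refine le_marginFn hnp hnm ?_ ?_
          · intro x hx
            have e : ⟪yβ, x⟫ + bβ
                = (1-β)*(⟪ys (t + 1), x⟫ + bs (t + 1)) + β*(⟪yh, x⟫ + bh) := by
              rw [hyβ, hbβ, inner_add_left, real_inner_smul_left, real_inner_smul_left]; ring
            rw [e]
            have h1 := hSpT x hx
            have h2 : dstar ≤ ⟪yh, x⟫ + bh := by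
              have e2 : ⟪yh, x⟫ + bh = (dualNorm p ystar)⁻¹ * (⟪ystar, x⟫ + bstar) := by
                rw [hyhinner, hbh]; ring
              rw [e2, le_inv_mul_iff₀ hDstar]
              linarith [hSpStar x hx]
            nlinarith
          · intro x hx
            have e : -⟪yβ, x⟫ - bβ
                = (1-β)*(-⟪ys (t + 1), x⟫ - bs (t + 1)) + β*(-⟪yh, x⟫ - bh) := by
              rw [hyβ, hbβ, inner_add_left, real_inner_smul_left, real_inner_smul_left]; ring
            rw [e]
            have h1 := hSmT x hx
            have h2 : dstar ≤ -⟪yh, x⟫ - bh := by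
              have e2 : -⟪yh, x⟫ - bh = (dualNorm p ystar)⁻¹ * (-⟪ystar, x⟫ - bstar) := by
                rw [hyhinner, hbh]; ring
              rw [e2, le_inv_mul_iff₀ hDstar]
              linarith [hSmStar x hx]
            nlinarith
        have hnorm : dualNorm p ((dualNorm p yβ)⁻¹ • yβ) = 1 := by
          rw [dualNorm_smul hd hpdef (inv_pos.mpr hβpos).le, inv_mul_cancel₀ hβpos.ne']
        have hopt2 := hopt _ ((dualNorm p yβ)⁻¹ * bβ) hnorm.le
        rw [marginFn_smul hfp hnp hfm hnm _ _ (inv_pos.mpr hβpos)] at hopt2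
        have hM : (1-β) * dseq (t + 1) + β * dstar ≤ dualNorm p yβ * dseq (t + 1) := by
          have h3 : (dualNorm p yβ)⁻¹ * ((1-β) * dseq (t + 1) + β * dstar) ≤ dseq (t + 1) :=
            le_trans (mul_le_mul_of_nonneg_left hmargβ (inv_pos.mpr hβpos).le) hopt2
          calc (1-β) * dseq (t + 1) + β * dstar
              = dualNorm p yβ * ((dualNorm p yβ)⁻¹ * ((1-β) * dseq (t + 1) + β * dstar)) := by
                rw [← mul_assoc, mul_inv_cancel₀ hβpos.ne', one_mul]
            _ ≤ dualNorm p yβ * dseq (t + 1) := mul_le_mul_of_nonneg_left h3 hβpos.le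
        obtain ⟨hpvβ, hinnerβ⟩ := hv yβ hyβ0
        have hup : dualNorm p yβ ≤ (1-β) + β * ⟪yh, v yβ⟫ := by
          have h1 : ⟪ys (t + 1), v yβ⟫ ≤ 1 := by
            have h2 := inner_le_dualNorm (y := ys (t + 1)) hd hpdef hpvβ
            rwa [hDT1] at h2
          have h2 : ⟪yβ, v yβ⟫ = (1-β) * ⟪ys (t + 1), v yβ⟫ + β * ⟪yh, v yβ⟫ := by
            rw [hyβ, inner_add_left, real_inner_smul_left, real_inner_smul_left]
          rw [← hinnerβ, h2]
          nlinarith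
        refine ⟨hyβ0, ?_⟩
        rw [div_le_iff₀ hdT]
        have h4 : dualNorm p yβ * dseq (t + 1) ≤ ((1-β) + β * ⟪yh, v yβ⟫) * dseq (t + 1) :=
          mul_le_mul_of_nonneg_right hup hdT.le
        nlinarith
      -- Step 5: limit along a sequence β → 0
      set βn : ℕ → ℝ := fun n => 1 / (n + 3) with hβn
      have hβnpos : ∀ n, 0 < βn n := fun n => by positivity
      have hβnhalf : ∀ n, βn n < 1/2 := by
        intro n
        rw [hβn]
        simp only
        rw [div_lt_div_iff₀ (by positivity) (by norm_num)]
        have h1 : (0:ℝ) ≤ (n : ℝ) := Nat.cast_nonneg n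
        linarith
      have hβn0 : Filter.Tendsto βn Filter.atTop (𝓝 0) := by
        refine squeeze_zero (fun n => (hβnpos n).le) (fun n => ?_)
          tendsto_one_div_add_atTop_nhds_zero_nat
        exact one_div_le_one_div_of_le (by positivity) (by push_cast; linarith)
      set yn : ℕ → E d := fun n => (1 - βn n) • ys (t + 1) + βn n • yh with hyn
      have hyntend : Filter.Tendsto yn Filter.atTop (𝓝 (ys (t + 1))) := by
        have h1 : Filter.Tendsto (fun n => (1 - βn n) • ys (t + 1)) Filter.atTop
            (𝓝 ((1 - (0:ℝ)) • ys (t + 1))) :=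
          ((tendsto_const_nhds.sub hβn0).smul tendsto_const_nhds)
        have h2 : Filter.Tendsto (fun n => βn n • yh) Filter.atTop (𝓝 ((0:ℝ) • yh)) :=
          hβn0.smul tendsto_const_nhds
        have h3 := h1.add h2
        simpa using h3
      have hclaim : ∀ n, yn n ≠ 0 ∧ dstar / dseq (t + 1) ≤ ⟪yh, v (yn n)⟫ := fun n =>
        claim6 (βn n) (hβnpos n) (hβnhalf n)
      obtain ⟨xs, hxsK, φ, hφ, hconv⟩ := (unitBall_compact hd hpdef).tendsto_subseq
        (x := fun n => v (yn n)) (fun n => (hv (yn n) (hclaim n).1).1)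
      have hphi : Filter.Tendsto (fun n => yn (φ n)) Filter.atTop (𝓝 (ys (t + 1))) :=
        hyntend.comp hφ.tendsto_atTop
      have hinner_xs : ⟪ys (t + 1), xs⟫ = dualNorm p (ys (t + 1)) := by
        have h1 : Filter.Tendsto (fun n => ⟪yn (φ n), v (yn (φ n))⟫) Filter.atTop
            (𝓝 ⟪ys (t + 1), xs⟫) := hphi.inner hconv
        have h2 : (fun n => ⟪yn (φ n), v (yn (φ n))⟫)
            = fun n => dualNorm p (yn (φ n)) :=
          funext fun n => (hv _ (hclaim (φ n)).1).2
        have h3 : Filter.Tendsto (fun n => dualNorm p (yn (φ n))) Filter.atTop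
            (𝓝 (dualNorm p (ys (t + 1)))) := dualNorm_tendsto hd hpdef hphi
        rw [h2] at h1
        exact tendsto_nhds_unique h1 h3
      have hxs_eq : xs = v (ys (t + 1)) :=
        maximizer_unique hd hpdef hsc hne0 hxsK hinner_xs hpv (by rw [hDT1]; exact hinner)
      have hfinal : dstar / dseq (t + 1) ≤ ⟪yh, v (ys (t + 1))⟫ := by
        have h1 : Filter.Tendsto (fun n => ⟪yh, v (yn (φ n))⟫) Filter.atTop (𝓝 ⟪yh, xs⟫) :=
          tendsto_const_nhds.inner hconv
        rw [hxs_eq] at h1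
        exact ge_of_tendsto h1 (Filter.Eventually.of_forall fun n => (hclaim (φ n)).2)
      -- assemble conclusion at t+1
      have hpos' : 0 < dualNorm p ystar * (dstar / dseq (t + 1)) :=
        mul_pos hDstar (div_pos hdstar hdT)
      have hconc1 : dualNorm p ystar * (dstar / dseq (t + 1)) ≤ ⟪ystar, v (ys (t + 1))⟫ := by
        have h1 := mul_le_mul_of_nonneg_left hfinal hDstar.le
        have h2 : dualNorm p ystar * ⟪yh, v (ys (t + 1))⟫ = ⟪ystar, v (ys (t + 1))⟫ := by
          rw [hyhinner, ← mul_assoc, mul_inv_cancel₀ hDstar.ne', one_mul]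
        rw [← h2]
        exact h1
      have hvpos : 0 < ⟪ystar, v (ys (t + 1))⟫ := lt_of_lt_of_le hpos' hconc1
      refine ⟨?_, fun _ => ⟨hconc1, hpos'⟩⟩
      -- maintain the invariant
      have hAT := hAg (t + 1) hT1
      rcases hlbl (Ag (t + 1)) with hl1 | hlm1
      · obtain ⟨hSpT', hSmT'⟩ := (hupd (t + 1) hT1).1 hl1
        rw [Nat.add_sub_cancel] at hSpT' hSmT'
        have hsmargin : dstar * dualNorm p ystar
            ≤ ⟪ystar, proxy p v lbl c (Ag (t + 1)) (ys (t + 1)) (bs (t + 1))⟫ + bstar := by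
          have hsep1 := hsep (Ag (t + 1)) hAT
          rw [hl1, one_mul] at hsep1
          have hsr : proxy p v lbl c (Ag (t + 1)) (ys (t + 1)) (bs (t + 1))
              = resp p v c (Ag (t + 1)) (ys (t + 1)) (bs (t + 1)) := by
            rw [proxy, if_neg]
            rintro ⟨-, -, -, h4⟩
            rw [hl1] at h4
            norm_num at h4
          rw [hsr, resp]
          split_ifs with hcond
          · obtain ⟨-, h2, h3⟩ := hcond
            rw [inner_add_right, real_inner_smul_right]
            have h5 : 0 ≤ (2 / c - (⟪ys (t + 1), Ag (t + 1)⟫ + bs (t + 1))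
                / dualNorm p (ys (t + 1))) * ⟪ystar, v (ys (t + 1))⟫ :=
              mul_nonneg (by linarith) hvpos.le
            linarith
          · exact hsep1
        refine ⟨?_, ?_, ?_, ?_, ?_, ?_⟩
        · rw [hSpT']; exact hfp.insert _
        · rw [hSpT']; exact Set.insert_nonempty _ _
        · rw [hSmT']; exact hfm
        · rw [hSmT']; exact hnm
        · rw [hSpT']
          rintro x (rfl | hx)
          · exact hsmargin
          · exact hSpStar x hx
        · rw [hSmT']; exact hSmStar
      · obtain ⟨hSmT', hSpT'⟩ := (hupd (t + 1) hT1).2 hlm1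
        rw [Nat.add_sub_cancel] at hSpT' hSmT'
        have hsmargin : dstar * dualNorm p ystar
            ≤ -⟪ystar, proxy p v lbl c (Ag (t + 1)) (ys (t + 1)) (bs (t + 1))⟫ - bstar := by
          have hsep1 := hsep (Ag (t + 1)) hAT
          rw [hlm1] at hsep1
          have hsep2 : dstar * dualNorm p ystar ≤ -⟪ystar, Ag (t + 1)⟫ - bstar := by linarith
          rw [proxy]
          split_ifs with hcond
          · obtain ⟨-, h2, -, -⟩ := hcond
            rw [inner_sub_right, real_inner_smul_right]
            have h5 : 0 ≤ ((⟪ys (t + 1), Ag (t + 1)⟫ + bs (t + 1))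
                / dualNorm p (ys (t + 1))) * ⟪ystar, v (ys (t + 1))⟫ :=
              mul_nonneg h2 hvpos.le
            linarith
          · rw [resp, if_neg]
            · exact hsep2
            · rintro ⟨ha, hb, hc'⟩
              exact hcond ⟨ha, hb, hc', hlm1⟩
        refine ⟨?_, ?_, ?_, ?_, ?_, ?_⟩
        · rw [hSpT']; exact hfp
        · rw [hSpT']; exact hnp
        · rw [hSmT']; exact hfm.insert _
        · rw [hSmT']; exact Set.insert_nonempty _ _
        · rw [hSpT']; exact hSpStar
        · rw [hSmT']
          rintro x (rfl | hx)
          · exact hsmargin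
          · exact hSmStar x hx
  exact fun t ht => (key t).2 ht
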